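/- Let $S$ be a numerical semigroup with multiplicity $m$, genus $g$, and Kunz coordinate vector $(k_1,\dots,k_{m-1})$. If for some $i \in [1,m-1]$ we have $k_i = 3$ and $3m + i$ is a minimal generator of $S$, then $g \geq 3m/2$. -/

import Mathlib

/-!
The genus is the sum `∑ x j` of the Kunz coordinates. Pair every residue `j ≠ i` with the
residue `j'` satisfying `j + j' ≡ i (mod m)`. Since `x i * m + i` is a minimal generator,
`x i ≤ x j + x j'`: for `j + j' = i` this is the Kunz inequality, while for `j + j' = m + i`
the Kunz inequality only gives `x i ≤ x j + x j' + 1`, and equality would write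
`x i * m + i` as `(x j * m + j) + (x j' * m + j')`. With `x i = 3`, summing over the `m - 2`
residues `j ≠ i` gives `2 (g - 3) ≥ 3 (m - 2)`.
-/

open Finset

namespace NumericalSemigroup

variable {S : AddSubmonoid ℕ} {m : ℕ}

theorem mul_add_mem_iff (hm : m ∈ S) {j k : ℕ} (hk : k * m + j ∈ S)
    (hk' : (k - 1) * m + j ∉ S) (a : ℕ) : a * m + j ∈ S ↔ k ≤ a := by
  constructor
  · intro ha
    by_contra! hlt
    have heq : a * m + j + (k - 1 - a) • m = (k - 1) * m + j := by
      rw [smul_eq_mul]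
      nlinarith [Nat.sub_add_cancel (show a ≤ k - 1 by omega)]
    exact hk' (heq ▸ add_mem ha (nsmul_mem hm _))
  · intro hle
    have heq : k * m + j + (a - k) • m = a * m + j := by
      rw [smul_eq_mul]
      nlinarith [Nat.sub_add_cancel hle]
    exact heq ▸ add_mem hk (nsmul_mem hm _)

def kunzGaps (m : ℕ) (x : ℕ → ℕ) : Finset ℕ :=
  ((Icc 1 (m - 1)).sigma fun j => range (x j)).image fun p => p.2 * m + p.1

theorem card_kunzGaps (hm0 : 0 < m) (x : ℕ → ℕ) :
    (kunzGaps m x).card = ∑ j ∈ Icc 1 (m - 1), x j := by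
  rw [kunzGaps, card_image_of_injOn, card_sigma]
  · simp only [card_range]
  rintro ⟨j, a⟩ hja ⟨j', a'⟩ hja' heq
  simp only [coe_sigma, Set.mem_sigma_iff, coe_Icc, Set.mem_Icc, coe_range, Set.mem_Iio]
    at hja hja' heq
  have hj : j = j' := by
    have := congrArg (· % m) heq
    simp only [Nat.mul_add_mod_self_right, Nat.mod_eq_of_lt (show j < m by omega),
      Nat.mod_eq_of_lt (show j' < m by omega)] at this
    exact this
  subst hj
  simp only [Sigma.mk.injEq, heq_eq_eq, true_and]
  exact Nat.eq_of_mul_eq_mul_right hm0 (by omega)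

theorem compl_eq_kunzGaps (hm0 : 0 < m) (hm : m ∈ S) {x : ℕ → ℕ}
    (hx : ∀ j, 1 ≤ j → j ≤ m - 1 → x j * m + j ∈ S ∧ (x j - 1) * m + j ∉ S) :
    (S : Set ℕ)ᶜ = kunzGaps m x := by
  ext n
  simp only [Set.mem_compl_iff, SetLike.mem_coe, kunzGaps, coe_image, coe_sigma,
    Set.mem_image, Set.mem_sigma_iff, coe_Icc, Set.mem_Icc, coe_range, Set.mem_Iio,
    Sigma.exists]
  constructor
  · intro hn
    have hmod : n % m ≠ 0 := fun h => hn (by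
      rw [← Nat.div_add_mod n m, h, add_zero, mul_comm, ← smul_eq_mul]
      exact nsmul_mem hm _)
    have hj : 1 ≤ n % m ∧ n % m ≤ m - 1 := ⟨by omega, by have := Nat.mod_lt n hm0; omega⟩
    refine ⟨n % m, n / m, ⟨hj, ?_⟩, Nat.div_add_mod' n m⟩
    by_contra! hle
    have hx' := hx _ hj.1 hj.2
    exact hn (Nat.div_add_mod' n m ▸ (mul_add_mem_iff hm hx'.1 hx'.2 _).2 hle)
  · rintro ⟨j, a, ⟨⟨hj1, hj2⟩, ha⟩, rfl⟩ hmem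
    have hx' := hx j hj1 hj2
    exact absurd ((mul_add_mem_iff hm hx'.1 hx'.2 a).1 hmem) (by omega)

theorem ncard_compl_eq_sum (hm0 : 0 < m) (hm : m ∈ S) {x : ℕ → ℕ}
    (hx : ∀ j, 1 ≤ j → j ≤ m - 1 → x j * m + j ∈ S ∧ (x j - 1) * m + j ∉ S) :
    (S : Set ℕ)ᶜ.ncard = ∑ j ∈ Icc 1 (m - 1), x j := by
  rw [compl_eq_kunzGaps hm0 hm hx, Set.ncard_coe_finset, card_kunzGaps hm0]

theorem le_add_of_minimal_generator {x : ℕ → ℕ} (hm : m ∈ S)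
    (hx : ∀ j, 1 ≤ j → j ≤ m - 1 → x j * m + j ∈ S ∧ (x j - 1) * m + j ∉ S)
    {i j k : ℕ} (hi : i ∈ Icc 1 (m - 1))
    (hgen : x i * m + i ∉ {y | ∃ a ∈ (S : Set ℕ) \ {0}, ∃ b ∈ (S : Set ℕ) \ {0}, y = a + b})
    (hj : j ∈ Icc 1 (m - 1)) (hk : k ∈ Icc 1 (m - 1))
    (hjk : j + k = i ∨ j + k = m + i) : x i ≤ x j + x k := by
  obtain ⟨hi1, hi2⟩ := mem_Icc.1 hi
  obtain ⟨hj1, hj2⟩ := mem_Icc.1 hj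
  obtain ⟨hk1, hk2⟩ := mem_Icc.1 hk
  have hsum := add_mem (hx j hj1 hj2).1 (hx k hk1 hk2).1
  have hxi := mul_add_mem_iff hm (hx i hi1 hi2).1 (hx i hi1 hi2).2
  rcases hjk with hjk | hjk
  · rw [show x j * m + j + (x k * m + k) = (x j + x k) * m + i by linarith] at hsum
    exact (hxi _).1 hsum
  · rw [show x j * m + j + (x k * m + k) = (x j + x k + 1) * m + i by linarith]
      at hsum
    rcases ((hxi _).1 hsum).lt_or_eq with hlt | heq
    · omega
    · refine absurd ⟨_, ⟨(hx j hj1 hj2).1, ?_⟩, _, ⟨(hx k hk1 hk2).1, ?_⟩, ?_⟩ hgen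
      · simp only [Set.mem_singleton_iff]; omega
      · simp only [Set.mem_singleton_iff]; omega
      · rw [heq]; linarith

def residuePartner (m i j : ℕ) : ℕ := if j < i then i - j else m + i - j

variable {i j : ℕ}

theorem residuePartner_mem (hi : i ≤ m - 1) (hj : j ∈ (Icc 1 (m - 1)).erase i) :
    residuePartner m i j ∈ (Icc 1 (m - 1)).erase i := by
  simp only [mem_erase, mem_Icc, residuePartner] at hj ⊢
  split <;> omega

theorem residuePartner_residuePartner (hi : i ≤ m - 1) (hj : j ∈ (Icc 1 (m - 1)).erase i) :
    residuePartner m i (residuePartner m i j) = j := by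
  simp only [mem_erase, mem_Icc, residuePartner] at hj ⊢
  split_ifs <;> omega

theorem add_residuePartner (hj : j ∈ (Icc 1 (m - 1)).erase i) :
    j + residuePartner m i j = i ∨ j + residuePartner m i j = m + i := by
  simp only [mem_erase, mem_Icc, residuePartner] at hj ⊢
  split <;> omega

end NumericalSemigroup

theorem Finset.card_mul_le_two_mul_sum_of_involution {ι : Type*} {T : Finset ι} {σ : ι → ι}
    (hσ : ∀ j ∈ T, σ j ∈ T) (hσσ : ∀ j ∈ T, σ (σ j) = j) {c : ℕ} {x : ι → ℕ}
    (h : ∀ j ∈ T, c ≤ x j + x (σ j)) : T.card * c ≤ 2 * ∑ j ∈ T, x j := by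
  have hswap : ∑ j ∈ T, x (σ j) = ∑ j ∈ T, x j :=
    sum_nbij' σ σ hσ hσ hσσ hσσ fun _ _ => rfl
  calc T.card * c = ∑ _j ∈ T, c := by rw [sum_const, smul_eq_mul]
    _ ≤ ∑ j ∈ T, (x j + x (σ j)) := sum_le_sum h
    _ = 2 * ∑ j ∈ T, x j := by rw [sum_add_distrib, hswap, two_mul]

open NumericalSemigroup

theorem stmt_17_general (S : Set ℕ) (h0 : 0 ∈ S) (hadd : ∀ a ∈ S, ∀ b ∈ S, a + b ∈ S)
    (m g : ℕ)
    (hm : sInf (S \ {0}) = m) (hg : Sᶜ.ncard = g)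
    (x : ℕ → ℕ)
    (hx : ∀ i, 1 ≤ i → i ≤ m - 1 → x i * m + i ∈ S ∧ (x i - 1) * m + i ∉ S)
    (i : ℕ) (hi1 : 1 ≤ i) (hi2 : i ≤ m - 1) (hxi : x i = 3)
    (hgen : 3 * m + i ∈ (S \ {0}) \ {y | ∃ a ∈ S \ {0}, ∃ b ∈ S \ {0}, y = a + b}) :
    (3 * m : ℚ) / 2 ≤ (g : ℚ) := by
  let M : AddSubmonoid ℕ := ⟨⟨S, fun ha hb => hadd _ ha _ hb⟩, h0⟩
  have hm0 : 0 < m := by omega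
  have hi : i ∈ Icc 1 (m - 1) := mem_Icc.2 ⟨hi1, hi2⟩
  have hmM : m ∈ M := by
    have hpos : 0 < sInf (S \ {0}) := hm ▸ hm0
    exact hm ▸ (Nat.sInf_mem (Nat.nonempty_of_pos_sInf hpos)).1
  have hgenus : g = x i + ∑ j ∈ (Icc 1 (m - 1)).erase i, x j := by
    rw [← hg, add_sum_erase _ _ hi]
    exact ncard_compl_eq_sum (S := M) hm0 hmM hx
  have hpairs :
      ((Icc 1 (m - 1)).erase i).card * 3 ≤ 2 * ∑ j ∈ (Icc 1 (m - 1)).erase i, x j := by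
    refine card_mul_le_two_mul_sum_of_involution (fun _ => residuePartner_mem hi2)
      (fun _ => residuePartner_residuePartner hi2) fun j hj => hxi ▸ ?_
    exact le_add_of_minimal_generator (S := M) hmM hx hi (hxi ▸ hgen.2) (mem_of_mem_erase hj)
      (mem_of_mem_erase (residuePartner_mem hi2 hj)) (add_residuePartner hj)
  rw [card_erase_of_mem hi, Nat.card_Icc] at hpairs
  rw [div_le_iff₀ two_pos]
  exact_mod_cast (by omega : 3 * m ≤ g * 2)

theorem stmt_17 (S : Set ℕ) (h0 : 0 ∈ S) (hadd : ∀ a ∈ S, ∀ b ∈ S, a + b ∈ S)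
    (hfin : Sᶜ.Finite) (m g : ℕ) (hm2 : 2 ≤ m)
    (hm : sInf (S \ {0}) = m) (hg : Sᶜ.ncard = g)
    (x : ℕ → ℕ)
    (hx : ∀ i, 1 ≤ i → i ≤ m - 1 → x i * m + i ∈ S ∧ (x i - 1) * m + i ∉ S)
    (i : ℕ) (hi1 : 1 ≤ i) (hi2 : i ≤ m - 1) (hxi : x i = 3)
    (hgen : 3 * m + i ∈ (S \ {0}) \ {y | ∃ a ∈ S \ {0}, ∃ b ∈ S \ {0}, y = a + b}) :
    (3 * m : ℚ) / 2 ≤ (g : ℚ) :=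
  stmt_17_general S h0 hadd m g hm hg x hx i hi1 hi2 hxi hgen
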